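/- For α > −1 and 0 ≤ k ≤ n, and any natural number j, the monic Laguerre polynomials satisfy the connection formula L_{n−k}^{α}(z) = Σ_{ν=k}^{k+j} binom(j, ν−k) · ((n−k)!/(n−ν)!) · L_{n−ν}^{α+j}(z), provided n ≥ k+j. -/

import Mathlib

open Polynomial Finset

/-- The monic Laguerre polynomials with parameter `α`, via the three-term recurrence
`L_{n+1} = (x - (2n+1+α)) L_n - n(n+α) L_{n-1}`. -/
noncomputable def laguerreM (α : ℝ) : ℕ → Polynomial ℝ
  | 0 => 1
  | 1 => X - C (α + 1)
  | (n + 2) =>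
      (X - C (2 * ((n : ℝ) + 1) + α + 1)) * laguerreM α (n + 1)
        - C (((n : ℝ) + 1) * (((n : ℝ) + 1) + α)) * laguerreM α n

/-! Monic Laguerre polynomials satisfy `L_m^α = L_m^{α+1} + m L_{m-1}^{α+1}`, which follows from
the three-term recurrence by two-step induction. Iterating it `j` times, Pascal's rule makes the
coefficients `C(j, i) · m(m-1)⋯(m-i+1)`; then put `m = n - k` and `ν = k + i`. -/

theorem Finset.sum_range_succ_choose_smul {M : Type*} [AddCommMonoid M] (f : ℕ → M) (j : ℕ) :
    ∑ i ∈ range (j + 2), (j + 1).choose i • f i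
      = ∑ i ∈ range (j + 1), j.choose i • (f i + f (i + 1)) := by
  have hshift : ∑ i ∈ range (j + 1), j.choose (i + 1) • f (i + 1) + f 0
      = ∑ i ∈ range (j + 1), j.choose i • f i := by
    rw [sum_range_succ, Nat.choose_succ_self, zero_smul, add_zero,
      sum_range_succ' (fun i => j.choose i • f i), Nat.choose_zero_right, one_smul]
  rw [sum_range_succ', Nat.choose_zero_right, one_smul]
  simp only [Nat.choose_succ_succ, add_smul, smul_add, sum_add_distrib]
  rw [← hshift]
  abel

theorem Nat.cast_descFactorial_eq_div {K : Type*} [DivisionRing K] [CharZero K] {n k : ℕ}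
    (h : k ≤ n) : (n.descFactorial k : K) = n.factorial / (n - k).factorial := by
  rw [eq_div_iff (Nat.cast_ne_zero.mpr (Nat.factorial_ne_zero _)), ← Nat.cast_mul, mul_comm,
    Nat.factorial_mul_descFactorial h]

theorem laguerreM_succ_eq_add (α : ℝ) :
    ∀ m : ℕ, laguerreM α (m + 1)
      = laguerreM (α + 1) (m + 1) + C ((m : ℝ) + 1) * laguerreM (α + 1) m
  | 0 => by simp only [laguerreM]; simp only [C_add, C_1, Nat.cast_zero, zero_add]; ring
  | 1 => by simp only [laguerreM]; push_cast; simp only [C_add, C_mul, C_1, C_0, map_ofNat]; ring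
  | m + 2 => by
    rw [laguerreM.eq_3 α (m + 1), laguerreM_succ_eq_add α (m + 1), laguerreM_succ_eq_add α m,
      laguerreM.eq_3 (α + 1) (m + 1), laguerreM.eq_3 (α + 1) m]
    push_cast
    simp only [C_add, C_mul, C_1, map_ofNat, map_natCast]
    ring

theorem laguerreM_eq_add_nsmul (α : ℝ) (m : ℕ) :
    laguerreM α m = laguerreM (α + 1) m + m • laguerreM (α + 1) (m - 1) := by
  cases m with
  | zero => simp [laguerreM]
  | succ m => rw [laguerreM_succ_eq_add, nsmul_eq_mul, ← C_eq_natCast]; push_cast; rfl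

theorem laguerreM_eq_sum_descFactorial (α : ℝ) (m j : ℕ) :
    laguerreM α m = ∑ i ∈ range (j + 1),
      (j.choose i * m.descFactorial i) • laguerreM (α + j) (m - i) := by
  induction j with
  | zero => simp
  | succ j ih =>
    simp_rw [ih, mul_smul]
    rw [sum_range_succ_choose_smul
      (fun i => m.descFactorial i • laguerreM (α + (j + 1 : ℕ)) (m - i))]
    refine sum_congr rfl fun i _ => congrArg _ ?_
    rw [laguerreM_eq_add_nsmul (α + j), Nat.descFactorial_succ, mul_smul, Nat.sub_sub, smul_add,
      smul_comm (m - i), Nat.cast_succ, add_assoc]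

theorem laguerre_connection_general (α : ℝ) (j k n : ℕ) (hn : k + j ≤ n) :
    laguerreM α (n - k)
      = ∑ ν ∈ Finset.Icc k (k + j),
          C ((j.choose (ν - k) : ℝ) * ((n - k).factorial : ℝ) / ((n - ν).factorial : ℝ))
            * laguerreM (α + j) (n - ν) := by
  rw [← Ico_add_one_right_eq_Icc, sum_Ico_eq_sum_range, show k + j + 1 - k = j + 1 by omega,
    laguerreM_eq_sum_descFactorial α (n - k) j]
  refine sum_congr rfl fun i hi_mem => ?_
  have hi : i ≤ n - k := by rw [mem_range] at hi_mem; omega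
  rw [add_tsub_cancel_left, ← Nat.sub_sub, mul_div_assoc, ← Nat.cast_descFactorial_eq_div hi,
    ← Nat.cast_mul, C_eq_natCast, nsmul_eq_mul]

/-- connection formula for monic Laguerre polynomials:
`L_{n−k}^{α} = Σ_{ν=k}^{k+j} C(j, ν−k) ((n−k)!/(n−ν)!) L_{n−ν}^{α+j}`
for `0 ≤ k ≤ n`, `n ≥ k + j`. -/
theorem laguerre_connection (α : ℝ) (hα : -1 < α) (j k n : ℕ)
    (hkn : k ≤ n) (hn : k + j ≤ n) :
    laguerreM α (n - k)
      = ∑ ν ∈ Finset.Icc k (k + j),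
          C ((j.choose (ν - k) : ℝ) * ((n - k).factorial : ℝ) / ((n - ν).factorial : ℝ))
            * laguerreM (α + j) (n - ν) :=
  laguerre_connection_general α j k n hn
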